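/- arXiv:2207.14459 — 2 statements merged into one kernel-verified Lean document; each statement's English description precedes it below -/
import Mathlib

section
/- Let N, K, L be positive integers with K < N, and ω(L) = Σ_{i=1}^{N-K} (-1)^{i+1} C(N-K,i) (1+i)^{L-1} / i^{L}. Then ω(L) / ((N-K)·2^{L-1}) → 1 as L → ∞. -/
/-!
Divide each term of `ω(L)` by `(N - K) 2^{L-1}`: the `i`-th term becomes a constant times
`((1 + i) / (2 i))^{L-1}`. This ratio is `1` for `i = 1` and lies in `[0, 1)` for `i ≥ 2`, so only
the `i = 1` term survives in the limit, and its constant is `C(N-K, 1) / (N - K) = 1`.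
-/

open Finset Filter Topology

noncomputable def omegaCoeff (M L : ℕ) : ℝ :=
  ∑ i ∈ Icc 1 M, (-1 : ℝ) ^ (i + 1) * (M.choose i : ℝ) * (1 + (i : ℝ)) ^ (L - 1) / (i : ℝ) ^ L

lemma mul_one_add_pow_div_pow_succ_div {F : Type*} [Field F] (a x m : F) (n : ℕ) :
    a * (1 + x) ^ n / x ^ (n + 1) / (m * 2 ^ n) = a / (x * m) * ((1 + x) / (2 * x)) ^ n := by
  rw [div_pow, mul_pow]
  ring

lemma tendsto_one_add_div_two_mul_pow_atTop_nhds_zero {x : ℝ} (hx : 1 < x) :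
    Tendsto (fun n : ℕ => ((1 + x) / (2 * x)) ^ n) atTop (𝓝 0) :=
  tendsto_pow_atTop_nhds_zero_of_lt_one (by positivity)
    ((div_lt_one (by positivity)).2 (by linarith))

lemma tendsto_one_add_natCast_div_two_mul_pow {i : ℕ} (hi : i ≠ 0) :
    Tendsto (fun n : ℕ => ((1 + i : ℝ) / (2 * i)) ^ n) atTop (𝓝 (if i = 1 then 1 else 0)) := by
  split_ifs with h
  · subst h
    norm_num
  · exact tendsto_one_add_div_two_mul_pow_atTop_nhds_zero (by norm_cast; omega)

theorem tendsto_omegaCoeff_div {M : ℕ} (hM : M ≠ 0) :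
    Tendsto (fun L => omegaCoeff M L / (M * 2 ^ (L - 1))) atTop (𝓝 1) := by
  let c : ℕ → ℝ := fun i => (-1 : ℝ) ^ (i + 1) * (M.choose i : ℝ) / (i * M)
  refine (tendsto_add_atTop_iff_nat 1).mp ?_
  have hterms : ∀ n, omegaCoeff M (n + 1) / (M * 2 ^ (n + 1 - 1)) =
      ∑ i ∈ Icc 1 M, c i * ((1 + i : ℝ) / (2 * i)) ^ n := by
    intro n
    simp only [omegaCoeff, Nat.add_sub_cancel, sum_div, mul_one_add_pow_div_pow_succ_div, c]
  have hlimit : ∑ i ∈ Icc 1 M, c i * (if i = 1 then 1 else 0) = 1 := by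
    have hM' : (M : ℝ) ≠ 0 := by exact_mod_cast hM
    simp [c, Nat.one_le_iff_ne_zero.2 hM, hM']
  have hsum := tendsto_finsetSum (Icc 1 M) fun i hi =>
    (tendsto_one_add_natCast_div_two_mul_pow (Nat.one_le_iff_ne_zero.1 (mem_Icc.1 hi).1)).const_mul
      (c i)
  rw [hlimit] at hsum
  simpa only [hterms] using hsum

theorem stmt_5_general (N K : ℕ) (hKN : K < N) :
    Tendsto (fun L : ℕ =>
        (∑ i ∈ Finset.Icc 1 (N - K),
            (-1 : ℝ) ^ (i + 1) * (Nat.choose (N - K) i : ℝ) *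
              (1 + (i : ℝ)) ^ (L - 1) / (i : ℝ) ^ L) /
          (((N : ℝ) - (K : ℝ)) * 2 ^ (L - 1)))
      atTop (nhds 1) := by
  rw [← Nat.cast_sub hKN.le]
  exact tendsto_omegaCoeff_div (Nat.sub_ne_zero_of_lt hKN)

/-- The `i = 1` term dominates: `ω(L)/((N-K)·2^{L-1}) → 1` as `L → ∞`, where
`ω(L) = Σ_{i=1}^{N-K} (-1)^{i+1} C(N-K,i) (1+i)^{L-1}/i^L`. -/
theorem stmt_5 (N K : ℕ) (hN : 0 < N) (hK : 0 < K) (hKN : K < N) :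
    Tendsto (fun L : ℕ =>
        (∑ i ∈ Finset.Icc 1 (N - K),
            (-1 : ℝ) ^ (i + 1) * (Nat.choose (N - K) i : ℝ) *
              (1 + (i : ℝ)) ^ (L - 1) / (i : ℝ) ^ L) /
          (((N : ℝ) - (K : ℝ)) * 2 ^ (L - 1)))
      atTop (nhds 1) :=
  stmt_5_general N K hKN
end

section
/- Let N, K, L be positive integers with K < N and let ψ(L) = Σ_{i=1}^{N-K} (-1)^{i+1} C(N-K,i) (i + 1 + iN/K)^{L-1} / i^{L}. Then ψ(L) / ((N-K) · (2 + N/K)^{L-1}) → 1 as L → ∞. -/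
/-! Normalised by `(N-K)(2+r)^{L-1}` with `r = N/K`, the `i = 1` term is exactly `1`, while the
`i`-th term is a constant times `q_i^{L-1}` with `q_i = (i+1+ir)/(i(2+r)) < 1` for `i ≥ 2`,
since `i + 1 < 2i`; so each of the finitely many other terms tends to `0`. -/

open Finset Filter Topology

lemma mul_pow_sub_one_div_pow_div_mul_pow {a x y t M : ℝ} (ht : t ≠ 0) (hy : y ≠ 0)
    {L : ℕ} (hL : 1 ≤ L) :
    a * x ^ (L - 1) / t ^ L / (M * y ^ (L - 1)) = a / (t * M) * (x / (t * y)) ^ (L - 1) := by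
  obtain ⟨m, rfl⟩ := Nat.exists_eq_add_of_le' hL
  simp only [Nat.add_sub_cancel, div_pow, mul_pow, pow_succ]
  field_simp

lemma tendsto_mul_pow_sub_one_div_pow_div_mul_pow {a x y t M : ℝ} (ht : t ≠ 0) (hy : y ≠ 0)
    (hxy : |x / (t * y)| < 1) :
    Tendsto (fun L : ℕ => a * x ^ (L - 1) / t ^ L / (M * y ^ (L - 1))) atTop (𝓝 0) := by
  have hpow : Tendsto (fun L : ℕ => a / (t * M) * (x / (t * y)) ^ (L - 1)) atTop (𝓝 0) := by
    simpa using ((tendsto_pow_atTop_nhds_zero_of_abs_lt_one hxy).comp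
      (tendsto_sub_atTop_nat 1)).const_mul (a / (t * M))
  refine hpow.congr' ?_
  filter_upwards [eventually_ge_atTop 1] with L hL
  exact (mul_pow_sub_one_div_pow_div_mul_pow ht hy hL).symm

lemma abs_div_lt_one_of_one_lt {r t : ℝ} (hr : 0 ≤ r) (ht : 1 < t) :
    |(t + 1 + t * r) / (t * (2 + r))| < 1 := by
  have hden : 0 < t * (2 + r) := by positivity
  rw [abs_of_nonneg (by positivity), div_lt_one hden]
  nlinarith

theorem tendsto_alternating_choose_sum_div (M : ℕ) (hM : 1 ≤ M) {r : ℝ} (hr : 0 ≤ r) :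
    Tendsto (fun L : ℕ =>
        (∑ i ∈ Icc 1 M, (-1 : ℝ) ^ (i + 1) * (M.choose i : ℝ) *
            ((i : ℝ) + 1 + (i : ℝ) * r) ^ (L - 1) / (i : ℝ) ^ L) /
          ((M : ℝ) * (2 + r) ^ (L - 1)))
      atTop (𝓝 1) := by
  have h2r : (2 + r) ≠ 0 := by positivity
  have hterm : ∀ i ∈ Icc 1 M, Tendsto (fun L : ℕ =>
      (-1 : ℝ) ^ (i + 1) * (M.choose i : ℝ) * ((i : ℝ) + 1 + (i : ℝ) * r) ^ (L - 1) /
        (i : ℝ) ^ L / ((M : ℝ) * (2 + r) ^ (L - 1))) atTop (𝓝 (if i = 1 then 1 else 0)) := by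
    intro i hi
    obtain ⟨hi1, -⟩ := mem_Icc.mp hi
    rcases hi1.eq_or_lt with rfl | hi2
    · refine tendsto_const_nhds.congr fun L => ?_
      have hM0 : (M : ℝ) ≠ 0 := by positivity
      simp only [if_true, Nat.choose_one_right, Nat.cast_one, one_pow, div_one, one_mul]
      rw [show (1 : ℝ) + 1 + r = 2 + r by ring]
      field_simp
      norm_num
    · rw [if_neg hi2.ne']
      exact tendsto_mul_pow_sub_one_div_pow_div_mul_pow (by positivity) h2r
        (abs_div_lt_one_of_one_lt hr (by exact_mod_cast hi2))
  have hsum := tendsto_finsetSum (Icc 1 M) hterm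
  rw [sum_ite_eq' (Icc 1 M) 1, if_pos (mem_Icc.mpr ⟨le_rfl, hM⟩)] at hsum
  simpa only [sum_div] using hsum

theorem stmt_10_general (N K : ℕ) (hKN : K < N) :
    Tendsto (fun L : ℕ =>
        (∑ i ∈ Finset.Icc 1 (N - K),
            (-1 : ℝ) ^ (i + 1) * (Nat.choose (N - K) i : ℝ) *
              ((i : ℝ) + 1 + (i : ℝ) * ((N : ℝ) / (K : ℝ))) ^ (L - 1) / (i : ℝ) ^ L) /
          (((N : ℝ) - (K : ℝ)) * (2 + (N : ℝ) / (K : ℝ)) ^ (L - 1)))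
      atTop (nhds 1) := by
  rw [← Nat.cast_sub hKN.le]
  exact tendsto_alternating_choose_sum_div (N - K) (by omega) (by positivity)

/-- The `i = 1` term dominates: `ψ(L)/((N-K)·(2+N/K)^{L-1}) → 1` as `L → ∞`, where
`ψ(L) = Σ_{i=1}^{N-K} (-1)^{i+1} C(N-K,i) (i+1+iN/K)^{L-1}/i^L`. -/
theorem stmt_10 (N K : ℕ) (hN : 0 < N) (hK : 0 < K) (hKN : K < N) :
    Tendsto (fun L : ℕ =>
        (∑ i ∈ Finset.Icc 1 (N - K),
            (-1 : ℝ) ^ (i + 1) * (Nat.choose (N - K) i : ℝ) *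
              ((i : ℝ) + 1 + (i : ℝ) * ((N : ℝ) / (K : ℝ))) ^ (L - 1) / (i : ℝ) ^ L) /
          (((N : ℝ) - (K : ℝ)) * (2 + (N : ℝ) / (K : ℝ)) ^ (L - 1)))
      atTop (nhds 1) :=
  stmt_10_general N K hKN
end
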